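/- Let v ∈ A₋* and suppose α − 1 = ⟦v, x⟧, i.e., M_v·(α−1) = x for some real x (meaning α−1 = the finite continued fraction with digit word v and tail x). Then α = ⟦^{(W)}v̂^{(−1)}, W·x⟧; in matrix form, M_v·(E·α) = W·E^{−1}·M_{v̂}·W·α, i.e., the relation M_v E = W E^{−1} M_{v̂} W viewed as an identity of Möbius actions applied to α. -/

import Mathlib

/-- M_{(−1:d)} = [[d,1],[−1,0]]. -/
def Mneg (d : ℤ) : Matrix (Fin 2) (Fin 2) ℤ := !![d, 1; -1, 0]

def Emat : Matrix (Fin 2) (Fin 2) ℤ := !![1, -1; 0, 1]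

/-- E⁻¹ = [[1,1],[0,1]]. -/
def EmatInv : Matrix (Fin 2) (Fin 2) ℤ := !![1, 1; 0, 1]

def Wmat : Matrix (Fin 2) (Fin 2) ℤ := !![1, 0; -1, -1]

/-- `prodRec f k = f (k−1) * ⋯ * f 1 * f 0`. -/
def prodRec (f : ℕ → Matrix (Fin 2) (Fin 2) ℤ) : ℕ → Matrix (Fin 2) (Fin 2) ℤ
  | 0 => 1
  | k + 1 => f k * prodRec f k

/-- M_v for v with characteristic sequence a₁⋯a_{2ℓ+1} (0-indexed a). -/
def Mword (a : ℕ → ℕ) (ℓ : ℕ) : Matrix (Fin 2) (Fin 2) ℤ :=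
  Mneg 2 ^ (a (2 * ℓ) - 1) *
    prodRec (fun k => Mneg (2 + (a (2 * k + 1) : ℤ)) * Mneg 2 ^ (a (2 * k) - 1)) ℓ

/-- M_{v̂} as the reversed product. -/
def Mhat (a : ℕ → ℕ) (ℓ : ℕ) : Matrix (Fin 2) (Fin 2) ℤ :=
  Mneg (2 + (a (2 * ℓ) : ℤ)) *
    prodRec (fun k => Mneg 2 ^ (a (2 * k + 1) - 1) * Mneg (2 + (a (2 * k) : ℤ))) ℓ

/-- Möbius action of an integer 2×2 matrix on ℝ. -/
noncomputable def mob (M : Matrix (Fin 2) (Fin 2) ℤ) (x : ℝ) : ℝ :=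
  ((M 0 0 : ℝ) * x + (M 0 1 : ℝ)) / ((M 1 0 : ℝ) * x + (M 1 1 : ℝ))

/-! The word `v̂` is read off the characteristic sequence of `v` backwards, and the letters of
`v` and `v̂` are intertwined by `X = E·W`: conjugating a run `M_{(−1:2)}^{n−1}` by `X` gives the single
letter `M_{(−1:2+n)}`, and `X` can be pushed through a run followed by a letter. Hence
`M_{v̂} = X·M_v·X`, and since `W·E⁻¹·X = W² = 1` and `X·W = E` this is `M_v·E = W·E⁻¹·M_{v̂}·W`.
Finally right multiplication by `E` acts on Möbius transformations as `α ↦ α − 1`. -/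

def Xmat : Matrix (Fin 2) (Fin 2) ℤ := Emat * Wmat

lemma Wmat_mul_Wmat : Wmat * Wmat = 1 := by
  simp [Wmat, Matrix.one_fin_two]

lemma EmatInv_mul_Emat : EmatInv * Emat = 1 := by
  simp [EmatInv, Emat, Matrix.one_fin_two]

lemma Mneg_two_pow (n : ℕ) : Mneg 2 ^ n = !![(n : ℤ) + 1, n; -n, 1 - n] := by
  induction n with
  | zero => simp [Matrix.one_fin_two]
  | succ n ih =>
    rw [pow_succ, ih, Mneg, Matrix.mul_fin_two]
    push_cast
    congr 1; ring_nf

lemma Xmat_mul_Mneg_two_pow_mul_Xmat {n : ℕ} (hn : 1 ≤ n) :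
    Xmat * Mneg 2 ^ (n - 1) * Xmat = Mneg (2 + n) := by
  obtain ⟨k, rfl⟩ := Nat.exists_eq_add_of_le' hn
  rw [Nat.add_sub_cancel, Mneg_two_pow]
  simp only [Xmat, Emat, Wmat, Mneg, Matrix.mul_fin_two]
  push_cast
  congr 1; ring_nf

lemma Xmat_mul_Mneg_two_pow_mul_Mneg {m n : ℕ} (hm : 1 ≤ m) (hn : 1 ≤ n) :
    Xmat * Mneg 2 ^ (n - 1) * Mneg (2 + m) = Mneg (2 + n) * Mneg 2 ^ (m - 1) * Xmat := by
  obtain ⟨j, rfl⟩ := Nat.exists_eq_add_of_le' hm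
  obtain ⟨k, rfl⟩ := Nat.exists_eq_add_of_le' hn
  rw [Nat.add_sub_cancel, Nat.add_sub_cancel, Mneg_two_pow, Mneg_two_pow]
  simp only [Xmat, Emat, Wmat, Mneg, Matrix.mul_fin_two]
  push_cast
  congr 1; ring_nf

lemma Mword_succ (a : ℕ → ℕ) (ℓ : ℕ) :
    Mword a (ℓ + 1) =
      Mneg 2 ^ (a (2 * (ℓ + 1)) - 1) * Mneg (2 + (a (2 * ℓ + 1) : ℤ)) * Mword a ℓ := by
  simp [Mword, prodRec, mul_assoc]

lemma Mhat_succ (a : ℕ → ℕ) (ℓ : ℕ) :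
    Mhat a (ℓ + 1) =
      Mneg (2 + (a (2 * (ℓ + 1)) : ℤ)) * Mneg 2 ^ (a (2 * ℓ + 1) - 1) * Mhat a ℓ := by
  simp [Mhat, prodRec, mul_assoc]

lemma Mhat_eq_Xmat_mul_Mword_mul_Xmat (a : ℕ → ℕ) (ℓ : ℕ) (ha : ∀ i ≤ 2 * ℓ, 1 ≤ a i) :
    Mhat a ℓ = Xmat * Mword a ℓ * Xmat := by
  induction ℓ with
  | zero => simp [Mword, Mhat, prodRec, Xmat_mul_Mneg_two_pow_mul_Xmat (ha 0 le_rfl)]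
  | succ ℓ ih =>
    have hrun : 1 ≤ a (2 * (ℓ + 1)) := ha _ le_rfl
    have hletter : 1 ≤ a (2 * ℓ + 1) := ha _ (by omega)
    calc Mhat a (ℓ + 1)
        = Mneg (2 + (a (2 * (ℓ + 1)) : ℤ)) * Mneg 2 ^ (a (2 * ℓ + 1) - 1) *
            (Xmat * Mword a ℓ * Xmat) := by
          rw [Mhat_succ, ih fun i hi => ha i (by omega)]
      _ = (Xmat * Mneg 2 ^ (a (2 * (ℓ + 1)) - 1) * Mneg (2 + (a (2 * ℓ + 1) : ℤ))) *
            (Mword a ℓ * Xmat) := by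
          rw [Xmat_mul_Mneg_two_pow_mul_Mneg hletter hrun]
          simp only [mul_assoc]
      _ = Xmat * Mword a (ℓ + 1) * Xmat := by
          rw [Mword_succ]
          simp only [mul_assoc]

lemma Mword_mul_Emat (a : ℕ → ℕ) (ℓ : ℕ) (ha : ∀ i ≤ 2 * ℓ, 1 ≤ a i) :
    Mword a ℓ * Emat = Wmat * EmatInv * Mhat a ℓ * Wmat := by
  rw [Mhat_eq_Xmat_mul_Mword_mul_Xmat a ℓ ha, Xmat]
  calc Mword a ℓ * Emat
      = (Wmat * (EmatInv * Emat) * Wmat) * Mword a ℓ * (Emat * (Wmat * Wmat)) := by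
        simp only [EmatInv_mul_Emat, Wmat_mul_Wmat, mul_one, one_mul]
    _ = Wmat * EmatInv * (Emat * Wmat * Mword a ℓ * (Emat * Wmat)) * Wmat := by
        simp only [mul_assoc]

lemma mob_mul_Emat (M : Matrix (Fin 2) (Fin 2) ℤ) (α : ℝ) :
    mob (M * Emat) α = mob M (α - 1) := by
  simp [mob, Emat, Matrix.mul_apply]
  ring_nf

/-- If α − 1 = ⟦v, x⟧, i.e. M_v·(α−1) = x, then α = ⟦^{(W)}v̂^{(−1)}, W·x⟧; in matrix
form, M_v · E = W · E⁻¹ · M_{v̂} · W as an identity of Möbius actions applied to α. -/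
theorem conversion_endpoint (a : ℕ → ℕ) (ℓ : ℕ) (ha : ∀ i ≤ 2 * ℓ, 1 ≤ a i)
    (α x : ℝ) (h : mob (Mword a ℓ) (α - 1) = x) :
    Mword a ℓ * Emat = Wmat * EmatInv * Mhat a ℓ * Wmat ∧
    mob (Wmat * EmatInv * Mhat a ℓ * Wmat) α = x := by
  have hconj := Mword_mul_Emat a ℓ ha
  refine ⟨hconj, ?_⟩
  rw [← hconj, mob_mul_Emat, h]
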